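/- arXiv:1307.7747 — 2 statements merged into one kernel-verified Lean document; each statement's English description precedes it below -/
import Mathlib

section
/- Let (n_i)_{i∈ℕ} be a sequence of positive integers and (p_i)_{i∈ℕ} a sequence of probabilities. Let X_i be binomially distributed with parameters n_i and p_i, and let k ∈ ℕ be a constant. Suppose μ_i := n_i·p_i → ∞ as i → ∞. Then P(X_i ≤ k) = O(μ_i^k · e^(−μ_i)), i.e., there exist constants D and i₀ such that P(X_i ≤ k) ≤ D·μ_i^k·e^(−μ_i) for all i ≥ i₀. -/
open Filter Asymptotics

/-- Let `Xᵢ ~ Bin(nᵢ, pᵢ)` and let `k` be a constant.  If `μᵢ := nᵢ pᵢ → ∞`, then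
`P(Xᵢ ≤ k) = O(μᵢ^k e^{-μᵢ})`.  Here `P(Xᵢ ≤ k)` is written out explicitly as
`∑_{j=0}^{k} C(nᵢ, j) pᵢ^j (1-pᵢ)^(nᵢ-j)`. -/
theorem binomial_lower_tail_bigO (n : ℕ → ℕ) (hn : ∀ i, 0 < n i) (p : ℕ → ℝ)
    (hp0 : ∀ i, 0 ≤ p i) (hp1 : ∀ i, p i ≤ 1) (k : ℕ)
    (hμ : Tendsto (fun i => (n i : ℝ) * p i) atTop atTop) :
    (fun i => ∑ j ∈ Finset.range (k + 1),
        ((n i).choose j : ℝ) * p i ^ j * (1 - p i) ^ (n i - j))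
      =O[atTop]
    fun i => ((n i : ℝ) * p i) ^ k * Real.exp (-((n i : ℝ) * p i)) := by
  rw [isBigO_iff]
  refine ⟨(k + 1) * Real.exp k, ?_⟩
  filter_upwards [hμ.eventually_ge_atTop ((k : ℝ) + 1)] with i hi
  set μ : ℝ := (n i : ℝ) * p i with hμdef
  have hp0' := hp0 i
  have hp1' := hp1 i
  have hμk : (k : ℝ) + 1 ≤ μ := hi
  have hμ1 : (1 : ℝ) ≤ μ := by
    have : (0:ℝ) ≤ k := Nat.cast_nonneg k
    linarith
  have hμpos : 0 < μ := lt_of_lt_of_le one_pos hμ1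
  have hμn : μ ≤ (n i : ℝ) := by
    calc μ = (n i : ℝ) * p i := rfl
    _ ≤ (n i : ℝ) * 1 := by
        exact mul_le_mul_of_nonneg_left hp1' (Nat.cast_nonneg _)
    _ = (n i : ℝ) := mul_one _
  -- termwise bound
  have hterm : ∀ j ∈ Finset.range (k + 1),
      ((n i).choose j : ℝ) * p i ^ j * (1 - p i) ^ (n i - j)
        ≤ μ ^ k * Real.exp k * Real.exp (-μ) := by
    intro j hj
    have hjk : j ≤ k := Nat.lt_succ_iff.mp (Finset.mem_range.mp hj)
    have hjn : j ≤ n i := by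
      have : (j : ℝ) ≤ (n i : ℝ) := by
        have h1 : (j : ℝ) ≤ (k : ℝ) := by exact_mod_cast hjk
        linarith
      exact_mod_cast this
    have h1 : ((n i).choose j : ℝ) * p i ^ j ≤ μ ^ j := by
      calc ((n i).choose j : ℝ) * p i ^ j ≤ ((n i : ℝ) ^ j) * p i ^ j := by
            apply mul_le_mul_of_nonneg_right _ (pow_nonneg hp0' j)
            exact_mod_cast Nat.choose_le_pow (n i) j
      _ = μ ^ j := by rw [hμdef, mul_pow]
    have h2 : (1 - p i) ^ (n i - j) ≤ Real.exp ((j : ℝ) - μ) := by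
      have hle : (1 - p i) ^ (n i - j) ≤ Real.exp (-p i) ^ (n i - j) := by
        apply pow_le_pow_left₀ (by linarith)
        linarith [Real.add_one_le_exp (-p i)]
      have heq : Real.exp (-p i) ^ (n i - j) = Real.exp (-(p i * (n i - j : ℕ))) := by
        rw [← Real.exp_nat_mul]; ring_nf
      have hcast : ((n i - j : ℕ) : ℝ) = (n i : ℝ) - j := by
        push_cast [Nat.cast_sub hjn]; ring
      have harg : -(p i * ((n i - j : ℕ) : ℝ)) ≤ (j : ℝ) - μ := by
        rw [hcast]
        have : p i * (j : ℝ) ≤ (j : ℝ) :=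
          mul_le_of_le_one_left (Nat.cast_nonneg _) hp1'
        nlinarith
      calc (1 - p i) ^ (n i - j) ≤ Real.exp (-(p i * (n i - j : ℕ))) := by
            rw [← heq]; exact hle
      _ ≤ Real.exp ((j : ℝ) - μ) := Real.exp_le_exp.mpr harg
    have hnonneg : (0:ℝ) ≤ ((n i).choose j : ℝ) * p i ^ j :=
      mul_nonneg (Nat.cast_nonneg _) (pow_nonneg hp0' j)
    calc ((n i).choose j : ℝ) * p i ^ j * (1 - p i) ^ (n i - j)
        ≤ μ ^ j * Real.exp ((j : ℝ) - μ) := by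
          apply mul_le_mul h1 h2 (pow_nonneg (by linarith) _) (pow_nonneg (le_of_lt hμpos) _)
      _ = μ ^ j * Real.exp j * Real.exp (-μ) := by
          rw [mul_assoc, ← Real.exp_add]; ring_nf
      _ ≤ μ ^ k * Real.exp k * Real.exp (-μ) := by
          apply mul_le_mul_of_nonneg_right _ (Real.exp_nonneg _)
          apply mul_le_mul (pow_le_pow_right₀ hμ1 hjk)
            (Real.exp_le_exp.mpr (by exact_mod_cast hjk)) (Real.exp_nonneg _)
            (pow_nonneg (le_of_lt hμpos) _)
      _ = μ ^ k * Real.exp k * Real.exp (-μ) := rfl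
  have hsum : ∑ j ∈ Finset.range (k + 1),
      ((n i).choose j : ℝ) * p i ^ j * (1 - p i) ^ (n i - j)
        ≤ (k + 1) * (μ ^ k * Real.exp k * Real.exp (-μ)) := by
    calc ∑ j ∈ Finset.range (k + 1),
        ((n i).choose j : ℝ) * p i ^ j * (1 - p i) ^ (n i - j)
        ≤ ∑ _j ∈ Finset.range (k + 1), μ ^ k * Real.exp k * Real.exp (-μ) :=
          Finset.sum_le_sum hterm
      _ = (k + 1) * (μ ^ k * Real.exp k * Real.exp (-μ)) := by
          rw [Finset.sum_const, Finset.card_range]; push_cast; ring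
  have hsumnn : 0 ≤ ∑ j ∈ Finset.range (k + 1),
      ((n i).choose j : ℝ) * p i ^ j * (1 - p i) ^ (n i - j) := by
    apply Finset.sum_nonneg
    intro j hj
    apply mul_nonneg (mul_nonneg (Nat.cast_nonneg _) (pow_nonneg hp0' j))
    exact pow_nonneg (by linarith) _
  rw [Real.norm_of_nonneg hsumnn, Real.norm_of_nonneg
    (mul_nonneg (pow_nonneg (le_of_lt hμpos) _) (Real.exp_nonneg _))]
  calc ∑ j ∈ Finset.range (k + 1),
      ((n i).choose j : ℝ) * p i ^ j * (1 - p i) ^ (n i - j)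
      ≤ (k + 1) * (μ ^ k * Real.exp k * Real.exp (-μ)) := hsum
    _ = (↑k + 1) * Real.exp k * (μ ^ k * Real.exp (-μ)) := by ring
end

section
/- Fix integers r ≥ 3 and L ≥ 1, and set K = rL. Let G be a graph equipped with an r-edge-colouring c such that: (1) every pair of distinct vertices of G is joined by at least rL independent r-paths; and (2) for no pair {v,w} of distinct vertices does the event A_{v,w} hold (with dangerous pairs defined relative to the colouring c and the constant K). Then rc(G) ≤ r, i.e., the edges of G admit a rainbow colouring with r colours. -/
/-!
For every dangerous pair choose, greedily, one of its `rL` independent `r`-paths so that the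
chosen paths are pairwise edge-disjoint, and recolour each chosen path with `r` distinct colours,
all other edges keeping their colour under `c`. Independent paths of length at least two share
no edge, so a chosen path (with its `r` edges) meets at most `r` of the `rL` paths of a pair.
Hence if the greedy step fails at a pair, or if every one of the more than `rL` independent
rainbow `r`-paths of a non-dangerous pair meets a recoloured edge, then `L` of these paths meet
chosen paths of `L` distinct dangerous pairs: this is the event `A`. So dangerous pairs are
joined by their recoloured path, and every other pair by a rainbow path avoiding the
recoloured edges.
-/

/-- The rainbow connection number of a graph: the least `k` such that the edges can be
coloured with `k` colours so that every pair of vertices is joined by a rainbow path. -/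
noncomputable def rcn {V : Type*} (G : SimpleGraph V) : ℕ :=
  sInf {k : ℕ | ∃ c : Sym2 V → Fin k, ∀ v w : V,
    ∃ P : G.Walk v w, P.IsPath ∧ (P.edges.map c).Nodup}

/-- The inner vertices of a walk, i.e. its support with the two endpoints removed. -/
def innerVerts {V : Type*} {G : SimpleGraph V} {a b : V} (P : G.Walk a b) : List V :=
  P.support.tail.dropLast

/-- A pair of vertices `x, y` is dangerous (w.r.t. the colouring `c` and the constant `K`)
if every family of pairwise independent rainbow `r`-paths joining `x` and `y` has at most
`K` members. -/
def Dangerous {V : Type*} (r : ℕ) (G : SimpleGraph V) (c : Sym2 V → Fin r) (K : ℕ)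
    (x y : V) : Prop :=
  ∀ (m : ℕ) (P : Fin m → G.Walk x y),
    (∀ i, (P i).IsPath ∧ (P i).length = r ∧ ((P i).edges.map c).Nodup) →
    (∀ i j, i ≠ j → ∀ z, z ∈ innerVerts (P i) → z ∉ innerVerts (P j)) →
    m ≤ K

/-- The event `A_{v,w}`: there are `L` independent `r`-paths `P₁, …, P_L` joining `v` and
`w` and `L` further `r`-paths `Q₁, …, Q_L` with endpoint pairs `{xᵢ, yᵢ}` such that
(i) each `Pᵢ` shares an edge with `Qᵢ`, (ii) the pairs `{xᵢ, yᵢ}` and `{v, w}` are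
pairwise distinct, and (iii) every pair `{xᵢ, yᵢ}` is dangerous. -/
def EventA {V : Type*} (r : ℕ) (G : SimpleGraph V) (c : Sym2 V → Fin r) (L K : ℕ)
    (v w : V) : Prop :=
  ∃ (P : Fin L → G.Walk v w) (x y : Fin L → V) (Q : ∀ i : Fin L, G.Walk (x i) (y i)),
    (∀ i, (P i).IsPath ∧ (P i).length = r) ∧
    (∀ i j, i ≠ j → ∀ z, z ∈ innerVerts (P i) → z ∉ innerVerts (P j)) ∧
    (∀ i, (Q i).IsPath ∧ (Q i).length = r) ∧
    (∀ i, ∃ e, e ∈ (P i).edges ∧ e ∈ (Q i).edges) ∧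
    (∀ i j, i ≠ j → s(x i, y i) ≠ s(x j, y j)) ∧
    (∀ i, s(x i, y i) ≠ s(v, w)) ∧
    (∀ i, Dangerous r G c K (x i) (y i))

open SimpleGraph Finset

theorem List.Nodup.mem_tail_dropLast_iff {α : Type*} {l : List α} (hl : l.Nodup) (hne : l ≠ [])
    {x : α} : x ∈ l.tail.dropLast ↔ x ∈ l ∧ x ≠ l.head hne ∧ x ≠ l.getLast hne := by
  obtain ⟨a, t, rfl⟩ := List.exists_cons_of_ne_nil hne
  rcases List.eq_nil_or_concat t with rfl | ⟨t, b, rfl⟩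
  · simp
  · simp only [List.concat_eq_append] at hl ⊢
    grind

theorem exists_injective_comp_of_card_fiber_le {β : Type*} [DecidableEq β] {m n L : ℕ}
    (hn : 0 < n) (hm : n * L ≤ m) (f : Fin m → β) (hfib : ∀ j, #{j' | f j' = f j} ≤ n) :
    ∃ g : Fin L → Fin m, Function.Injective (f ∘ g) := by
  have hL : L ≤ #(univ.image f) := by
    have := card_le_mul_card_image univ n (by simpa using hfib)
    rw [card_univ, Fintype.card_fin] at this
    exact Nat.le_of_mul_le_mul_left (hm.trans this) hn
  obtain ⟨emb⟩ := Function.Embedding.nonempty_of_card_le (α := Fin L) (β := univ.image f)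
    (by simpa using hL)
  have hpre : ∀ b : univ.image f, ∃ j, f j = b := fun b => by
    obtain ⟨j, -, hj⟩ := mem_image.1 b.2
    exact ⟨j, hj⟩
  choose pre hpre using hpre
  refine ⟨pre ∘ emb, fun i i' h => emb.injective (Subtype.ext ?_)⟩
  simpa only [Function.comp_apply, hpre] using h

theorem exists_recoloring_of_pairwise_disjoint {α ι : Type*} {n : ℕ} (l : ι → List α)
    (hl : ∀ i, (l i).Nodup ∧ (l i).length ≤ n) (hdisj : Pairwise fun i j => (l i).Disjoint (l j))
    (c : α → Fin n) :
    ∃ χ : α → Fin n, (∀ i, ((l i).map χ).Nodup) ∧ ∀ a, (∀ i, a ∉ l i) → χ a = c a := by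
  classical
  have owner : ∀ {a i j}, a ∈ l i → a ∈ l j → i = j := fun hi hj =>
    by_contra fun hij => hdisj hij hi hj
  let χ a := if h : ∃ i, a ∈ l i then
    (⟨(l h.choose).idxOf a, (List.idxOf_lt_length_iff.2 h.choose_spec).trans_le (hl _).2⟩ : Fin n)
    else c a
  have hχ : ∀ {a i}, a ∈ l i → (χ a : ℕ) = (l i).idxOf a := fun {a i} ha => by
    have h : ∃ i, a ∈ l i := ⟨i, ha⟩
    simp only [χ, dif_pos h, owner h.choose_spec ha]
  refine ⟨χ, fun i => (hl i).1.map_on fun a ha b hb hab => ?_, fun a ha => dif_neg (by simpa)⟩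
  rwa [← List.idxOf_inj ha, ← hχ ha, ← hχ hb, Fin.val_inj]

namespace SimpleGraph.Walk

variable {V : Type*} {G : SimpleGraph V} {u w : V}

theorem innerVerts_reverse (P : G.Walk u w) : innerVerts P.reverse = (innerVerts P).reverse := by
  simp [innerVerts, List.tail_reverse, List.dropLast_reverse, List.tail_dropLast]

theorem IsPath.mem_innerVerts_iff {P : G.Walk u w} (hP : P.IsPath) {z : V} :
    z ∈ innerVerts P ↔ z ∈ P.support ∧ z ≠ u ∧ z ≠ w := by
  rw [innerVerts, hP.support_nodup.mem_tail_dropLast_iff P.support_ne_nil, P.head_support,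
    P.getLast_support]

theorem IsPath.disjoint_edges_of_innerVerts {P Q : G.Walk u w} (hP : P.IsPath) (hQ : Q.IsPath)
    (hlen : 2 ≤ P.length) (h : ∀ z ∈ innerVerts P, z ∉ innerVerts Q) :
    P.edges.Disjoint Q.edges := by
  intro e heP heQ
  induction e using Sym2.ind with | h p q => ?_
  have hend : ∀ z ∈ s(p, q), z = u ∨ z = w := fun z hz => by
    by_contra! hz'
    exact h z (hP.mem_innerVerts_iff.2 ⟨P.mem_support_of_mem_edges heP hz, hz'⟩)
      (hQ.mem_innerVerts_iff.2 ⟨Q.mem_support_of_mem_edges heQ hz, hz'⟩)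
  have hpq : p ≠ q := (P.adj_of_mem_edges heP).ne
  have huw : s(p, q) = s(u, w) := by
    rcases hend p (Sym2.mem_mk_left p q) with rfl | rfl <;>
      rcases hend q (Sym2.mem_mk_right p q) with rfl | rfl <;> simp_all [Sym2.eq_swap]
  rw [huw] at heP
  have := hP.length_eq_one_of_mem_edges heP
  omega

end SimpleGraph.Walk

section Rainbow

variable {V : Type*} {G : SimpleGraph V} {r : ℕ} {c : Sym2 V → Fin r}

theorem Dangerous.symm {K : ℕ} {x y : V} (h : Dangerous r G c K x y) :
    Dangerous r G c K y x := by
  intro m P hP hind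
  refine h m (fun i => (P i).reverse) (fun i => ?_) (fun i j hij z hi hj => ?_)
  · obtain ⟨hpath, hlen, hrainbow⟩ := hP i
    exact ⟨hpath.reverse, by simpa using hlen, by simpa using hrainbow⟩
  · simp only [Walk.innerVerts_reverse, List.mem_reverse] at hi hj
    exact hind i j hij z hi hj

theorem Dangerous.of_sym2_eq {K : ℕ} {x y v w : V} (h : Dangerous r G c K x y)
    (hxy : s(x, y) = s(v, w)) : Dangerous r G c K v w := by
  rcases Sym2.eq_iff.1 hxy with ⟨rfl, rfl⟩ | ⟨rfl, rfl⟩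
  exacts [h, h.symm]

theorem exists_rainbow_path_of_sym2_eq {α : Type*} {χ : Sym2 V → α} {x y v w : V}
    (hxy : s(x, y) = s(v, w)) {P : G.Walk x y} (hP : P.IsPath) (hχ : (P.edges.map χ).Nodup) :
    ∃ Q : G.Walk v w, Q.IsPath ∧ (Q.edges.map χ).Nodup := by
  rcases Sym2.eq_iff.1 hxy with ⟨rfl, rfl⟩ | ⟨rfl, rfl⟩
  exacts [⟨P, hP, hχ⟩, ⟨P.reverse, hP.reverse, by simpa using hχ⟩]

def IndepPaths (r : ℕ) {v w : V} {m : ℕ} (P : Fin m → G.Walk v w) : Prop :=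
  (∀ i, (P i).IsPath ∧ (P i).length = r) ∧
    ∀ i j, i ≠ j → ∀ z, z ∈ innerVerts (P i) → z ∉ innerVerts (P j)

theorem IndepPaths.disjoint_edges {v w : V} {m : ℕ} {P : Fin m → G.Walk v w}
    (hP : IndepPaths r P) (hr : 2 ≤ r) {i j : Fin m} (hij : i ≠ j) :
    (P i).edges.Disjoint (P j).edges :=
  (hP.1 i).1.disjoint_edges_of_innerVerts (hP.1 j).1 ((hP.1 i).2 ▸ hr) (hP.2 i j hij)

structure IsDangerousSystem (r K : ℕ) (c : Sym2 V → Fin r)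
    (S : Finset (Σ p : V × V, G.Walk p.1 p.2)) : Prop where
  isPath : ∀ P ∈ S, P.2.IsPath ∧ P.2.length = r
  dangerous : ∀ P ∈ S, Dangerous r G c K P.1.1 P.1.2
  injOn_ends : Set.InjOn (fun P : Σ p : V × V, G.Walk p.1 p.2 => s(P.1.1, P.1.2)) S
  pairwise_disjoint_edges :
    (S : Set (Σ p : V × V, G.Walk p.1 p.2)).Pairwise fun P Q => P.2.edges.Disjoint Q.2.edges

variable {L K : ℕ} {S : Finset (Σ p : V × V, G.Walk p.1 p.2)}

theorem IsDangerousSystem.exists_edges_notMem (hS : IsDangerousSystem r K c S) (hr : 2 ≤ r)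
    {v w : V} (hA : ¬ EventA r G c L K v w) (hvw : ∀ P ∈ S, s(P.1.1, P.1.2) ≠ s(v, w)) {m : ℕ}
    {C : Fin m → G.Walk v w} (hC : IndepPaths r C) (hm : r * L ≤ m) :
    ∃ j, ∀ e ∈ (C j).edges, ∀ P ∈ S, e ∉ P.2.edges := by
  classical
  by_contra! hhit
  choose e heC F hFS heF using hhit
  have hfib : ∀ j, #{j' | F j' = F j} ≤ r := fun j => by
    calc #{j' | F j' = F j} ≤ #(F j).2.edges.toFinset := by
          refine card_le_card_of_injOn e (fun j' hj' => ?_) fun j₁ hj₁ j₂ hj₂ he => ?_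
          · simp only [coe_filter, mem_univ, true_and, Set.mem_ofPred_eq] at hj'
            exact List.mem_toFinset.2 (hj' ▸ heF j')
          · by_contra hne
            exact hC.disjoint_edges hr hne (heC j₁) (he ▸ heC j₂)
      _ ≤ r := (List.toFinset_card_le _).trans_eq (by simp [(hS.isPath _ (hFS j)).2])
  obtain ⟨g, hg⟩ := exists_injective_comp_of_card_fiber_le (by omega) hm F hfib
  refine hA ⟨C ∘ g, fun i => (F (g i)).1.1, fun i => (F (g i)).1.2, fun i => (F (g i)).2,
    fun i => hC.1 (g i), fun i j hij => hC.2 _ _ (hg.of_comp.ne hij),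
    fun i => hS.isPath _ (hFS _), fun i => ⟨e (g i), heC _, heF _⟩,
    fun i j hij h => hij (hg (hS.injOn_ends (hFS _) (hFS _) h)),
    fun i => hvw _ (hFS _), fun i => hS.dangerous _ (hFS _)⟩

theorem exists_isDangerousSystem [DecidableEq V] (hr : 2 ≤ r)
    (h1 : ∀ v w : V, v ≠ w → ∃ P : Fin (r * L) → G.Walk v w, IndepPaths r P)
    (h2 : ∀ v w : V, v ≠ w → ¬ EventA r G c L K v w) (T : Finset (Sym2 V))
    (hT : ∀ z ∈ T, ∃ x y, x ≠ y ∧ Dangerous r G c K x y ∧ s(x, y) = z) :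
    ∃ S : Finset (Σ p : V × V, G.Walk p.1 p.2),
      IsDangerousSystem r K c S ∧ S.image (fun P => s(P.1.1, P.1.2)) = T := by
  induction T using Finset.induction_on with
  | empty => exact ⟨∅, ⟨by simp, by simp, by simp, by simp⟩, image_empty _⟩
  | @insert z T hzT ih =>
    obtain ⟨S, hS, hST⟩ := ih fun z' hz' => hT z' (mem_insert_of_mem hz')
    obtain ⟨x, y, hxy, hdang, rfl⟩ := hT _ (mem_insert_self _ _)
    obtain ⟨C, hC⟩ := h1 x y hxy
    have hfresh : ∀ P ∈ S, s(P.1.1, P.1.2) ≠ s(x, y) := fun P hP h =>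
      hzT (hST ▸ h ▸ mem_image_of_mem _ hP)
    obtain ⟨j, hj⟩ := hS.exists_edges_notMem hr (h2 x y hxy) hfresh hC le_rfl
    have hnew : (⟨(x, y), C j⟩ : Σ p : V × V, G.Walk p.1 p.2) ∉ S := fun h => hfresh _ h rfl
    refine ⟨insert ⟨(x, y), C j⟩ S, ⟨?_, ?_, ?_, ?_⟩, by rw [image_insert, hST]⟩
    · exact (forall_mem_insert _ _ _).2 ⟨hC.1 j, hS.isPath⟩
    · exact (forall_mem_insert _ _ _).2 ⟨hdang, hS.dangerous⟩
    · rw [coe_insert, Set.injOn_insert (mem_coe.not.2 hnew)]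
      exact ⟨hS.injOn_ends, fun ⟨P, hP, h⟩ => hfresh P hP h⟩
    · rw [coe_insert, Set.pairwise_insert]
      exact ⟨hS.pairwise_disjoint_edges, fun P hP _ =>
        ⟨fun e he heP => hj e he P hP heP, fun e heP he => hj e he P hP heP⟩⟩

theorem IsDangerousSystem.exists_rainbow_path_of_not_dangerous
    (hS : IsDangerousSystem r (r * L) c S) (hr : 2 ≤ r) {v w : V}
    (hA : ¬ EventA r G c L (r * L) v w) (hdang : ¬ Dangerous r G c (r * L) v w)
    {χ : Sym2 V → Fin r} (hχ : ∀ e, (∀ P ∈ S, e ∉ P.2.edges) → χ e = c e) :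
    ∃ P : G.Walk v w, P.IsPath ∧ (P.edges.map χ).Nodup := by
  obtain ⟨m, C, hC, hCind, hm⟩ : ∃ (m : ℕ) (C : Fin m → G.Walk v w),
      (∀ i, (C i).IsPath ∧ (C i).length = r ∧ ((C i).edges.map c).Nodup) ∧
      (∀ i j, i ≠ j → ∀ z, z ∈ innerVerts (C i) → z ∉ innerVerts (C j)) ∧ r * L < m := by
    simpa [Dangerous] using hdang
  obtain ⟨j, hj⟩ := hS.exists_edges_notMem hr hA
    (fun P hP h => hdang ((hS.dangerous P hP).of_sym2_eq h))
    ⟨fun i => ⟨(hC i).1, (hC i).2.1⟩, hCind⟩ hm.le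
  refine ⟨C j, (hC j).1, ?_⟩
  rw [List.map_congr_left fun e he => hχ e (hj e he)]
  exact (hC j).2.2

end Rainbow

theorem rcn_le_of_no_eventA_general {V : Type*} [Fintype V] (r L : ℕ) (hr : 3 ≤ r)
    (G : SimpleGraph V) (c : Sym2 V → Fin r)
    (h1 : ∀ v w : V, v ≠ w →
      ∃ P : Fin (r * L) → G.Walk v w,
        (∀ i, (P i).IsPath ∧ (P i).length = r) ∧
        (∀ i j, i ≠ j → ∀ z, z ∈ innerVerts (P i) → z ∉ innerVerts (P j)))
    (h2 : ∀ v w : V, v ≠ w → ¬ EventA r G c L (r * L) v w) :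
    rcn G ≤ r := by
  classical
  have hr2 : 2 ≤ r := by omega
  let D := (univ.filter fun p : V × V => p.1 ≠ p.2 ∧ Dangerous r G c (r * L) p.1 p.2).image
    fun p => s(p.1, p.2)
  obtain ⟨S, hS, hcover⟩ := exists_isDangerousSystem hr2 h1 h2 D (by
    simp only [D, mem_image, mem_filter, mem_univ, true_and]
    rintro z ⟨⟨x, y⟩, ⟨hxy, hd⟩, rfl⟩
    exact ⟨x, y, hxy, hd, rfl⟩)
  obtain ⟨χ, hχS, hχc⟩ := exists_recoloring_of_pairwise_disjoint (fun P : S => P.1.2.edges)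
    (fun P => ⟨(hS.isPath _ P.2).1.edges_nodup, by simp [(hS.isPath _ P.2).2]⟩)
    (fun P Q hPQ => hS.pairwise_disjoint_edges P.2 Q.2 (Subtype.coe_ne_coe.2 hPQ)) c
  refine Nat.sInf_le ⟨χ, fun v w => ?_⟩
  rcases eq_or_ne v w with rfl | hvw
  · exact ⟨.nil, .nil, by simp⟩
  by_cases hdang : Dangerous r G c (r * L) v w
  · have hvwD : s(v, w) ∈ D := mem_image_of_mem _ (mem_filter.2 ⟨mem_univ (v, w), hvw, hdang⟩)
    obtain ⟨P, hPS, hP⟩ := mem_image.1 (hcover ▸ hvwD)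
    exact exists_rainbow_path_of_sym2_eq hP (hS.isPath P hPS).1 (hχS ⟨P, hPS⟩)
  · exact hS.exists_rainbow_path_of_not_dangerous hr2 (h2 v w hvw) hdang
      fun e he => hχc e fun P => he P.1 P.2

/-- Fix `r ≥ 3`, `L ≥ 1` and set `K = rL`.  Let `G` be a graph with an `r`-edge-colouring
`c` such that (1) every pair of distinct vertices is joined by at least `rL` independent
`r`-paths, and (2) for no pair `{v, w}` of distinct vertices does the event `A_{v,w}`
hold (with dangerous pairs defined relative to `c` and `K`).  Then `rc(G) ≤ r`. -/
theorem rcn_le_of_no_eventA {V : Type*} [Fintype V] (r L : ℕ) (hr : 3 ≤ r) (hL : 1 ≤ L)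
    (G : SimpleGraph V) (c : Sym2 V → Fin r)
    (h1 : ∀ v w : V, v ≠ w →
      ∃ P : Fin (r * L) → G.Walk v w,
        (∀ i, (P i).IsPath ∧ (P i).length = r) ∧
        (∀ i j, i ≠ j → ∀ z, z ∈ innerVerts (P i) → z ∉ innerVerts (P j)))
    (h2 : ∀ v w : V, v ≠ w → ¬ EventA r G c L (r * L) v w) :
    rcn G ≤ r :=
  rcn_le_of_no_eventA_general r L hr G c h1 h2
end
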